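/- Let p ≥ 1, m ≥ 0, and let g₁, g₂ : [m] → [p] be functions. In the single-leader captain network G_S(p,m,g₁,g₂), the core number of every captain equals the core number of the leader l. Moreover, if p ≥ 2 then this common value is p+1, and if p = 1 then every vertex of G_S(p,m,g₁,g₂) has core number exactly 2. -/

import Mathlib

/-!
The leader together with all captains spans a subgraph of minimum degree `p + 1`: the leader
sees `2p ≥ p + 1` captains, and a captain sees the leader and the `p` captains of the other
group. Adding one `x_ℓ` (joined to two captains) keeps the minimum degree at least `2`.

Conversely, a vertex set in which every vertex has `k > p + 1 ≥ 2` neighbours is peeled away: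
it contains no `x_ℓ` (degree `2`), hence no captain (at most `p + 1` other neighbours), hence
not the leader (no other neighbours).
-/

/-- The core number of a vertex `v`: the largest `k` such that `v` belongs to a subgraph
in which every vertex has degree at least `k` within that subgraph (equivalently, an
induced subgraph with minimum degree at least `k`). -/
noncomputable def coreNumber {V : Type*} (G : SimpleGraph V) (v : V) : ℕ :=
  sSup {k : ℕ | ∃ s : Set V, v ∈ s ∧ ∀ w ∈ s, k ≤ (s ∩ G.neighborSet w).ncard}

/-- Vertices of the single-leader captain network: the leader `l`, two groups of `p`
captains `C_{s,j}` (`s ∈ {1,2}`), and `m` remaining vertices `x_ℓ`. -/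
inductive CSV (p m : ℕ) where
  | L : CSV p m
  | C : Fin 2 → Fin p → CSV p m
  | X : Fin m → CSV p m

/-- Generating relation of the single-leader captain network `G_S(p,m,g₁,g₂)` (with
`g = ![g₁, g₂]`): the leader is joined to every captain, the two captain groups form a
complete bipartite graph, and `x_ℓ` is joined to `C_{1,g₁(ℓ)}` and `C_{2,g₂(ℓ)}`. -/
def csRel {p m : ℕ} (g : Fin 2 → Fin m → Fin p) : CSV p m → CSV p m → Prop
  | .L, .C _ _ => True
  | .C s _, .C s' _ => s ≠ s'
  | .X ℓ, .C s j => j = g s ℓ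
  | _, _ => False

/-- The single-leader captain network `G_S(p,m,g₁,g₂)` (with `g = ![g₁, g₂]`). -/
def singleCaptainNetwork {p m : ℕ} (g : Fin 2 → Fin m → Fin p) : SimpleGraph (CSV p m) :=
  SimpleGraph.fromRel (csRel g)

namespace SimpleGraph

variable {V : Type*} (G : SimpleGraph V)

def MinDegreeOn (s : Set V) (k : ℕ) : Prop :=
  ∀ w ∈ s, k ≤ (s ∩ G.neighborSet w).ncard

variable {G} {s R : Set V} {k k' : ℕ} {v w : V}

theorem MinDegreeOn.mono (hs : G.MinDegreeOn s k) (hk : k' ≤ k) : G.MinDegreeOn s k' :=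
  fun w hw => hk.trans (hs w hw)

theorem MinDegreeOn.insert [Finite V] (hs : G.MinDegreeOn s k)
    (hv : k ≤ (insert v s ∩ G.neighborSet v).ncard) : G.MinDegreeOn (insert v s) k := by
  rintro w (rfl | hw)
  · exact hv
  · exact (hs w hw).trans <| Set.ncard_le_ncard <|
      Set.inter_subset_inter_left _ (Set.subset_insert v s)

theorem MinDegreeOn.notMem_of_ncard_lt [Finite V] (hs : G.MinDegreeOn s k) (hR : Disjoint s R)
    (hw : (G.neighborSet w \ R).ncard < k) : w ∉ s := fun hws =>
  (hw.trans_le (hs w hws)).not_ge <| Set.ncard_le_ncard fun u ⟨hus, hu⟩ =>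
    ⟨hu, hR.notMem_of_mem_left hus⟩

end SimpleGraph

open SimpleGraph

section CoreNumber

variable {V : Type*} {G : SimpleGraph V} {v : V} {s : Set V} {k n : ℕ}

theorem le_coreNumber [Finite V] (hv : v ∈ s) (hs : G.MinDegreeOn s k) : k ≤ coreNumber G v :=
  le_csSup ⟨Nat.card V, fun _ ⟨_, hu, hsu⟩ => (hsu _ hu).trans (Set.ncard_le_card _)⟩ ⟨s, hv, hs⟩

theorem coreNumber_le (h : ∀ s k, v ∈ s → G.MinDegreeOn s k → k ≤ n) : coreNumber G v ≤ n :=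
  csSup_le' fun _ ⟨s, hv, hs⟩ => h s _ hv hs

end CoreNumber

namespace CSV

variable {p m : ℕ} {g : Fin 2 → Fin m → Fin p}

instance : Finite (CSV p m) :=
  Finite.of_surjective (fun x : (Unit ⊕ Fin 2 × Fin p) ⊕ Fin m => match x with
    | .inl (.inl _) => L
    | .inl (.inr (t, j)) => C t j
    | .inr ℓ => X ℓ) <| by
  rintro (_ | ⟨t, j⟩ | ℓ)
  exacts [⟨.inl (.inl ()), rfl⟩, ⟨.inl (.inr (t, j)), rfl⟩, ⟨.inr ℓ, rfl⟩]

variable (p m) in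
def captains : Set (CSV p m) := Set.range fun x : Fin 2 × Fin p => C x.1 x.2

theorem C_injective : Function.Injective fun x : Fin 2 × Fin p => (C x.1 x.2 : CSV p m) := by
  rintro ⟨_, _⟩ ⟨_, _⟩ h
  cases h
  rfl

theorem ncard_range_C (t : Fin 2) : (Set.range (C t : Fin p → CSV p m)).ncard = p := by
  rw [Set.ncard_range_of_injective fun _ _ h => by cases h; rfl, Nat.card_eq_fintype_card,
    Fintype.card_fin]

theorem ncard_captains : (captains p m).ncard = 2 * p := by
  rw [captains, Set.ncard_range_of_injective C_injective, Nat.card_eq_fintype_card,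
    Fintype.card_prod, Fintype.card_fin, Fintype.card_fin]

theorem adj_L_C (t : Fin 2) (j : Fin p) : (singleCaptainNetwork g).Adj L (C t j) := by
  simp [singleCaptainNetwork, csRel]

theorem adj_C_C {t t' : Fin 2} (h : t ≠ t') (j j' : Fin p) :
    (singleCaptainNetwork g).Adj (C t j) (C t' j') := by
  simp [singleCaptainNetwork, csRel, h]

theorem adj_X_C (ℓ : Fin m) (t : Fin 2) : (singleCaptainNetwork g).Adj (X ℓ) (C t (g t ℓ)) := by
  simp [singleCaptainNetwork, csRel]

theorem neighborSet_L_subset : (singleCaptainNetwork g).neighborSet L ⊆ captains p m := by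
  rintro (_ | ⟨t, j⟩ | ℓ) h
  all_goals simp_all [singleCaptainNetwork, csRel, captains]

theorem neighborSet_X_subset (ℓ : Fin m) :
    (singleCaptainNetwork g).neighborSet (X ℓ) ⊆ {C 0 (g 0 ℓ), C 1 (g 1 ℓ)} := by
  rintro (_ | ⟨t, j⟩ | ℓ) h
  all_goals simp_all [singleCaptainNetwork, csRel]
  fin_cases t <;> simp

theorem neighborSet_C_diff_subset (t : Fin 2) (j : Fin p) :
    (singleCaptainNetwork g).neighborSet (C t j) \ Set.range X ⊆
      insert L (Set.range (C (t + 1))) := by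
  rintro (_ | ⟨t', j'⟩ | ℓ) h
  all_goals simp_all [singleCaptainNetwork, csRel]
  omega

theorem coreNumber_le_succ (hp : 1 ≤ p) (v : CSV p m) :
    coreNumber (singleCaptainNetwork g) v ≤ p + 1 := by
  refine _root_.coreNumber_le fun s k hv hs => ?_
  by_contra! hk
  have hX : Disjoint s (Set.range X) := Set.disjoint_right.2 <| by
    rintro _ ⟨ℓ, rfl⟩
    refine hs.notMem_of_ncard_lt (Set.disjoint_empty s) ?_
    calc _ ≤ ({C 0 (g 0 ℓ), C 1 (g 1 ℓ)} : Set (CSV p m)).ncard :=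
          Set.ncard_le_ncard (by simpa using neighborSet_X_subset ℓ)
      _ ≤ 2 := (Set.ncard_insert_le _ _).trans_eq (by rw [Set.ncard_singleton])
      _ < k := by omega
  have hXC : Disjoint s (Set.range X ∪ captains p m) := Set.disjoint_union_right.2 ⟨hX,
    Set.disjoint_right.2 <| by
      rintro _ ⟨⟨t, j⟩, rfl⟩
      refine hs.notMem_of_ncard_lt hX ?_
      calc _ ≤ (insert L (Set.range (C (t + 1)))).ncard :=
            Set.ncard_le_ncard (neighborSet_C_diff_subset t j)
        _ ≤ p + 1 := (Set.ncard_insert_le _ _).trans_eq (by rw [ncard_range_C])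
        _ < k := hk⟩
  have hL : L ∉ s := hs.notMem_of_ncard_lt hXC <| by
    rw [Set.sdiff_eq_empty.2 (neighborSet_L_subset.trans Set.subset_union_right),
      Set.ncard_empty]
    omega
  rcases v with _ | ⟨t, j⟩ | ℓ
  exacts [hL hv, hXC.notMem_of_mem_left hv (.inr ⟨(t, j), rfl⟩),
    hX.notMem_of_mem_left hv ⟨ℓ, rfl⟩]

variable (p m) in
def leaderAndCaptains : Set (CSV p m) := insert L (captains p m)

theorem minDegreeOn_leaderAndCaptains (hp : 1 ≤ p) :
    (singleCaptainNetwork g).MinDegreeOn (leaderAndCaptains p m) (p + 1) := by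
  rintro _ (rfl | ⟨⟨t, j⟩, rfl⟩)
  · calc p + 1 ≤ 2 * p := by omega
      _ = (captains p m).ncard := ncard_captains.symm
      _ ≤ _ := Set.ncard_le_ncard <| Set.subset_inter (Set.subset_insert _ _) <| by
          rintro _ ⟨⟨t, j⟩, rfl⟩
          exact adj_L_C t j
  · calc p + 1 = (insert L (Set.range (C (t + 1)))).ncard := by
          rw [Set.ncard_insert_of_notMem (by simp), ncard_range_C]
      _ ≤ _ := Set.ncard_le_ncard <| Set.subset_inter ?_ ?_
    · rintro _ (rfl | ⟨j', rfl⟩)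
      exacts [Set.mem_insert _ _, .inr ⟨(t + 1, j'), rfl⟩]
    · rintro _ (rfl | ⟨j', rfl⟩)
      exacts [(adj_L_C t j).symm, adj_C_C (t := t) (t' := t + 1) (by revert t; decide) j j']

theorem minDegreeOn_insert_X (hp : 1 ≤ p) (ℓ : Fin m) :
    (singleCaptainNetwork g).MinDegreeOn (insert (X ℓ) (leaderAndCaptains p m)) 2 := by
  refine ((minDegreeOn_leaderAndCaptains hp).mono (by omega)).insert ?_
  calc 2 = ({C 0 (g 0 ℓ), C 1 (g 1 ℓ)} : Set (CSV p m)).ncard := (Set.ncard_pair (by simp)).symm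
    _ ≤ _ := Set.ncard_le_ncard <| Set.subset_inter ?_ ?_
  · rintro _ (rfl | rfl)
    exacts [.inr (.inr ⟨(0, _), rfl⟩), .inr (.inr ⟨(1, _), rfl⟩)]
  · rintro _ (rfl | rfl)
    exacts [adj_X_C ℓ 0, adj_X_C ℓ 1]

theorem coreNumber_L (hp : 1 ≤ p) : coreNumber (singleCaptainNetwork g) L = p + 1 :=
  (coreNumber_le_succ hp L).antisymm <|
    le_coreNumber (Set.mem_insert _ _) (minDegreeOn_leaderAndCaptains hp)

theorem coreNumber_C (hp : 1 ≤ p) (t : Fin 2) (j : Fin p) :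
    coreNumber (singleCaptainNetwork g) (C t j) = p + 1 :=
  (coreNumber_le_succ hp _).antisymm <|
    le_coreNumber (.inr ⟨(t, j), rfl⟩) (minDegreeOn_leaderAndCaptains hp)

theorem coreNumber_X_of_eq_one (hp : p = 1) (ℓ : Fin m) :
    coreNumber (singleCaptainNetwork g) (X ℓ) = 2 :=
  ((coreNumber_le_succ hp.ge _).trans_eq (by rw [hp])).antisymm <|
    le_coreNumber (Set.mem_insert _ _) (minDegreeOn_insert_X hp.ge ℓ)

end CSV

/-- In the single-leader captain network with `p ≥ 1`: the core number of every captain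
equals the core number of the leader; if `p ≥ 2` this common value is `p + 1`; and if
`p = 1` every vertex has core number exactly 2. -/
theorem stmt_17 {p m : ℕ} (hp : 1 ≤ p) (g₁ g₂ : Fin m → Fin p) :
    (∀ (s : Fin 2) (j : Fin p),
      coreNumber (singleCaptainNetwork ![g₁, g₂]) (CSV.C s j) =
      coreNumber (singleCaptainNetwork ![g₁, g₂]) CSV.L) ∧
    (2 ≤ p → coreNumber (singleCaptainNetwork ![g₁, g₂]) CSV.L = p + 1) ∧
    (p = 1 → ∀ v : CSV p m, coreNumber (singleCaptainNetwork ![g₁, g₂]) v = 2) := by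
  refine ⟨fun t j => (CSV.coreNumber_C hp t j).trans (CSV.coreNumber_L hp).symm,
    fun _ => CSV.coreNumber_L hp, ?_⟩
  rintro rfl (_ | ⟨t, j⟩ | ℓ)
  exacts [CSV.coreNumber_L le_rfl, CSV.coreNumber_C le_rfl t j, CSV.coreNumber_X_of_eq_one rfl ℓ]
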